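/- (Face version of complementary connectedness.) Let P ⊆ ℝ^d be a polytope, F a nonempty face of P, f : ℝ^d → ℝ a linear functional and c ∈ ℝ. If the set of extreme points v of P lying in F with f(v) ≤ c is nonempty, then this set induces a connected subgraph of the graph G_P of P; i.e., no face of P has its surviving vertices disconnected by a cutset defined by a halfspace. -/

import Mathlib

open Set

/-- The graph `G_P` of a polytope `P`: vertices are the extreme points of `P`,
with `u` and `v` adjacent iff `u ≠ v` and the closed segment `[u, v]` is an
exposed face of `P`. -/
def polytopeGraph {d : ℕ} (P : Set (Fin d → ℝ)) : SimpleGraph (Fin d → ℝ) where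
  Adj u v := u ≠ v ∧ u ∈ P.extremePoints ℝ ∧ v ∈ P.extremePoints ℝ ∧
    IsExposed ℝ P (segment ℝ u v)
  symm := by
    constructor
    rintro u v ⟨h1, h2, h3, h4⟩
    exact ⟨h1.symm, h3, h2, by rwa [segment_symm]⟩
  loopless := ⟨fun u h => h.1 rfl⟩

/-!
From a vertex of a polytope that does not maximize a functional `f`, some edge goes strictly up:
tilting the hyperplane that exposes the vertex towards `f` until it meets a higher vertex gives a
smaller exposed face containing both, and one inducts on the number of vertices. Walking up,
every vertex in the halfspace `c ≤ f` reaches, inside the halfspace, the face on which `f` is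
maximal. That face is a polytope with fewer vertices, whose graph is connected by the same
argument applied to a functional separating two of its vertices, and its edges are edges of the
polytope because an exposed face of an exposed face of a polytope is exposed. The face `F` is
itself a polytope, to which all this applies with `-f` and `-c`.
-/

open Filter Topology

variable {E : Type*} [NormedAddCommGroup E] [NormedSpace ℝ E]

theorem convexHull_extremePoints_eq_of_finite {K : Set E} (hK : IsCompact K) (hKc : Convex ℝ K)
    (hfin : (K.extremePoints ℝ).Finite) : convexHull ℝ (K.extremePoints ℝ) = K := by
  rw [← (hfin.isClosed_convexHull (𝕜 := ℝ)).closure_eq]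
  exact closure_convexHull_extremePoints hK hKc

namespace ContinuousLinearMap

variable (p : E →L[ℝ] ℝ) {s : Set E}

theorem toExposed_subset : p.toExposed s ⊆ s := sep_subset _ _

theorem mem_toExposed_convexHull_iff {w : E} (hw : w ∈ s) :
    w ∈ p.toExposed (convexHull ℝ s) ↔ w ∈ p.toExposed s := by
  refine ⟨fun h => ⟨hw, fun y hy => h.2 y (subset_convexHull ℝ s hy)⟩, fun h => ?_⟩
  refine ⟨subset_convexHull ℝ s hw, fun y hy => ?_⟩
  obtain ⟨z, hz, hyz⟩ :=
    (p.toLinearMap.convexOn (convex_convexHull ℝ s)).exists_ge_of_mem_convexHull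
      (subset_convexHull ℝ s) hy
  exact hyz.trans (h.2 z hz)

theorem toExposed_convexHull (hs : s.Finite) :
    p.toExposed (convexHull ℝ s) = convexHull ℝ (p.toExposed s) := by
  have hexp : IsExposed ℝ (convexHull ℝ s) (p.toExposed (convexHull ℝ s)) :=
    toExposed.isExposed
  apply Subset.antisymm
  · -- Krein–Milman: the face is the hull of its extreme points, which are vertices of `s`.
    have hext : (p.toExposed (convexHull ℝ s)).extremePoints ℝ ⊆ p.toExposed s := fun x hx =>
      have hxs := extremePoints_convexHull_subset
        (hexp.isExtreme.extremePoints_subset_extremePoints hx)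
      (p.mem_toExposed_convexHull_iff hxs).1 (extremePoints_subset hx)
    rw [← convexHull_extremePoints_eq_of_finite (hexp.isCompact (hs.isCompact_convexHull (𝕜 := ℝ)))
      (hexp.convex (convex_convexHull ℝ s)) ((hs.subset p.toExposed_subset).subset hext)]
    exact convexHull_mono hext
  · intro x hx
    obtain ⟨z, hz, hzx⟩ :=
      (p.toLinearMap.concaveOn (convex_convexHull ℝ _)).exists_le_of_mem_convexHull
        (subset_convexHull ℝ _) hx
    have hz' := (p.mem_toExposed_convexHull_iff hz.1).2 hz
    exact ⟨convexHull_mono p.toExposed_subset hx, fun y hy => (hz'.2 y hy).trans hzx⟩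

theorem isExposed_convexHull_toExposed (hs : s.Finite) :
    IsExposed ℝ (convexHull ℝ s) (convexHull ℝ (p.toExposed s)) := by
  rw [← p.toExposed_convexHull hs]
  exact toExposed.isExposed

theorem mem_toExposed_iff_eq {v w : E} (hv : v ∈ p.toExposed s) :
    w ∈ p.toExposed s ↔ w ∈ s ∧ p w = p v :=
  ⟨fun hw => ⟨hw.1, (hv.2 w hw.1).antisymm (hw.2 v hv.1)⟩,
    fun ⟨hw, hwv⟩ => ⟨hw, fun y hy => hwv ▸ hv.2 y hy⟩⟩

end ContinuousLinearMap

theorem eventually_add_mul_lt {a b : ℝ} (hab : a < b) (x y : ℝ) :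
    ∀ᶠ δ in 𝓝[>] 0, a + δ * x < b + δ * y := by
  have hcont : ∀ z w : ℝ, Tendsto (fun δ : ℝ => z + δ * w) (𝓝[>] 0) (𝓝 z) := fun z w => by
    have h : Continuous fun δ : ℝ => z + δ * w := by fun_prop
    simpa using (h.tendsto 0).mono_left nhdsWithin_le_nhds
  exact (hcont a x).eventually_lt (hcont b y) hab

theorem IsExposed.trans_convexHull {s F G : Set E} (hs : s.Finite)
    (hF : IsExposed ℝ (convexHull ℝ s) F) (hG : IsExposed ℝ F G) :
    IsExposed ℝ (convexHull ℝ s) G := by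
  obtain rfl | hGne := G.eq_empty_or_nonempty
  · exact isExposed_empty
  obtain ⟨h, rfl⟩ := hG hGne
  obtain ⟨g, rfl⟩ := hF (hGne.mono (sep_subset _ _))
  change (h.toExposed (g.toExposed (convexHull ℝ s))).Nonempty at hGne
  change IsExposed ℝ (convexHull ℝ s) (h.toExposed (g.toExposed (convexHull ℝ s)))
  rw [g.toExposed_convexHull hs, h.toExposed_convexHull (hs.subset g.toExposed_subset)] at hGne ⊢
  obtain ⟨v, hv⟩ := convexHull_nonempty_iff.1 hGne
  have hv₁ : v ∈ g.toExposed s := hv.1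
  -- Lexicographic tilt: for small `δ > 0`, `g + δ • h` is maximal on `s` exactly where first `g`
  -- and then `h` are.
  have hsmall : ∀ᶠ δ in 𝓝[>] 0, ∀ w ∈ s, g w < g v → g w + δ * h w < g v + δ * h v :=
    (eventually_all_finite hs).2 fun w _ =>
      eventually_imp_distrib_left.2 fun hw => eventually_add_mul_lt hw _ _
  obtain ⟨δ, hδ, hδpos⟩ := (hsmall.and self_mem_nhdsWithin).exists
  have hφ : ∀ x, (g + δ • h) x = g x + δ * h x := fun _ => rfl
  have hφv : v ∈ (g + δ • h).toExposed s := by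
    refine ⟨hv₁.1, fun w hw => ?_⟩
    rcases (hv₁.2 w hw).lt_or_eq with hlt | heq
    · exact (hδ w hw hlt).le
    · have hhw := hv.2 w ((g.mem_toExposed_iff_eq hv₁).2 ⟨hw, heq⟩)
      rw [hφ, hφ, heq]
      gcongr
  refine fun _ => ⟨g + δ • h, ?_⟩
  change _ = (g + δ • h).toExposed (convexHull ℝ s)
  rw [(g + δ • h).toExposed_convexHull hs]
  congr 1
  ext w
  rw [(g + δ • h).mem_toExposed_iff_eq hφv, h.mem_toExposed_iff_eq hv,
    g.mem_toExposed_iff_eq hv₁, hφ, hφ, and_assoc]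
  refine and_congr_right fun hw => ⟨fun ⟨hg, hh⟩ => by rw [hg, hh], fun he => ?_⟩
  have hg : g w = g v := by
    by_contra hne
    exact (hδ w hw ((hv₁.2 w hw).lt_of_ne hne)).ne he
  rw [hg, add_right_inj] at he
  exact ⟨hg, mul_left_cancel₀ hδpos.ne' he⟩

namespace ConvexIndependent

variable {s : Set E} (hsi : ConvexIndependent ℝ ((↑) : s → E)) (hs : s.Finite)
include hsi hs

theorem exists_forall_lt {v : E} (hv : v ∈ s) :
    ∃ l : E →L[ℝ] ℝ, ∀ w ∈ s, w ≠ v → l w < l v := by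
  obtain ⟨l, a, hlt, ha⟩ := geometric_hahn_banach_closed_point (convex_convexHull ℝ _)
    ((hs.sdiff (t := {v})).isClosed_convexHull (𝕜 := ℝ))
    (convexIndependent_set_iff_notMem_convexHull_sdiff.1 hsi v hv)
  exact ⟨l, fun w hw hwv => (hlt w (subset_convexHull ℝ _ ⟨hw, hwv⟩)).trans ha⟩

theorem extremePoints_convexHull : (convexHull ℝ s).extremePoints ℝ = s := by
  refine extremePoints_convexHull_subset.antisymm fun v hv => ?_
  obtain ⟨l, hl⟩ := hsi.exists_forall_lt hs hv
  have hface : l.toExposed s = {v} := by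
    refine eq_singleton_iff_unique_mem.2 ⟨⟨hv, fun w hw => ?_⟩, fun w hw => ?_⟩
    · rcases eq_or_ne w v with rfl | hwv
      exacts [le_rfl, (hl w hw hwv).le]
    · by_contra hwv
      exact (hl w hw.1 hwv).not_ge (hw.2 v hv)
  have := l.isExposed_convexHull_toExposed hs
  rw [hface, convexHull_singleton] at this
  exact isExtreme_singleton.1 this.isExtreme

theorem exists_not_affine (h3 : 2 < s.ncard) (f : E →L[ℝ] ℝ) :
    ∃ g : E →L[ℝ] ℝ, ¬∃ a b : ℝ, ∀ w ∈ s, g w = a + b * f w := by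
  by_contra! H
  have hne : s.Nonempty := nonempty_of_ncard_ne_zero (by omega)
  obtain ⟨w₀, hw₀, hmin⟩ := s.exists_min_image f hs hne
  obtain ⟨w₁, hw₁, hmax⟩ := s.exists_max_image f hs hne
  obtain ⟨w, hw, hw₀₁⟩ := exists_mem_notMem_of_ncard_lt_ncard
    (((ncard_insert_le w₀ {w₁}).trans_eq (by rw [ncard_singleton])).trans_lt h3)
  simp only [mem_insert_iff, mem_singleton_iff, not_or] at hw₀₁
  -- Every functional is affine in `f` on `s`, so `w` lies between `w₀` and `w₁` as `f w` does.
  obtain ⟨a, b, ha, hb, hab, hfw⟩ : f w ∈ segment ℝ (f w₀) (f w₁) := by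
    rw [segment_eq_Icc (hmin w₁ hw₁)]
    exact ⟨hmin w hw, hmax w hw⟩
  have hseg : a • w₀ + b • w₁ = w := SeparatingDual.eq_iff_forall_dual_eq.2 fun g => by
    obtain ⟨α, β, hg⟩ := H g
    simp only [map_add, map_smul, smul_eq_mul, hg _ hw, hg _ hw₀, hg _ hw₁, ← hfw]
    linear_combination α * hab
  exact convexIndependent_set_iff_notMem_convexHull_sdiff.1 hsi w hw
    (segment_subset_convexHull (s := s \ {w}) ⟨hw₀, Ne.symm hw₀₁.1⟩ ⟨hw₁, Ne.symm hw₀₁.2⟩ ⟨a, b, ha, hb, hab, hseg⟩)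

theorem exists_lt_not_affine (h3 : 2 < s.ncard) (v : E) (f : E →L[ℝ] ℝ) :
    ∃ g : E →L[ℝ] ℝ, (∃ u ∈ s, g v < g u) ∧ ¬∃ a b : ℝ, ∀ w ∈ s, g w = a + b * f w := by
  obtain ⟨g, hg⟩ := hsi.exists_not_affine hs h3 f
  obtain ⟨w, hw, hgw⟩ : ∃ w ∈ s, g w ≠ g v := by
    by_contra! hgconst
    exact hg ⟨g v, 0, fun w hw => by simp [hgconst w hw]⟩
  rcases hgw.lt_or_gt with hlt | hlt
  · refine ⟨-g, ⟨w, hw, neg_lt_neg hlt⟩, fun ⟨a, b, hab⟩ => hg ⟨-a, -b, fun w hw => ?_⟩⟩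
    have := hab w hw
    simp only [neg_apply] at this
    linarith
  · exact ⟨g, ⟨w, hw, hlt⟩, hg⟩

end ConvexIndependent

/-- Rotating the hyperplane that exposes `v` about `v`, towards `g`, until it meets a vertex lying
above `v` in direction `g`. -/
theorem exists_tilt_toExposed {s : Set E} (hs : s.Finite) {l g : E →L[ℝ] ℝ} {v u₀ : E}
    (hv : v ∈ s) (hl : ∀ w ∈ s, w ≠ v → l w < l v) (hu₀ : u₀ ∈ s) (hgu₀ : g v < g u₀) :
    ∃ t : ℝ, 0 < t ∧ v ∈ (l + t • g).toExposed s ∧ ∃ u ∈ (l + t • g).toExposed s, g v < g u := by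
  obtain ⟨u, ⟨hu, hgu⟩, hmin⟩ := exists_min_image {w ∈ s | g v < g w}
    (fun w => (l v - l w) / (g w - g v)) (hs.subset (sep_subset _ _)) ⟨u₀, hu₀, hgu₀⟩
  have huv : u ≠ v := by
    rintro rfl
    exact hgu.false
  set t := (l v - l u) / (g u - g v)
  have hφ : ∀ x, (l + t • g) x = l x + t * g x := fun _ => rfl
  have ht : 0 < t := div_pos (sub_pos.2 (hl u hu huv)) (sub_pos.2 hgu)
  have hvmax : v ∈ (l + t • g).toExposed s := by
    refine ⟨hv, fun w hw => ?_⟩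
    rw [hφ, hφ]
    rcases lt_or_ge (g v) (g w) with hgw | hgw
    · have := (le_div_iff₀ (sub_pos.2 hgw)).1 (hmin w ⟨hw, hgw⟩)
      linarith
    · rcases eq_or_ne w v with rfl | hwv
      · exact le_rfl
      · nlinarith [hl w hw hwv]
  refine ⟨t, ht, hvmax, u, ((l + t • g).mem_toExposed_iff_eq hvmax).2 ⟨hu, ?_⟩, hgu⟩
  rw [hφ, hφ]
  have : t * (g u - g v) = l v - l u := div_mul_cancel₀ _ (sub_pos.2 hgu).ne'
  linarith

namespace ConvexIndependent

variable {s : Set E} (hsi : ConvexIndependent ℝ ((↑) : s → E)) (hs : s.Finite)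
include hsi hs

theorem exists_toExposed_ssubset (h3 : 2 < s.ncard) {v u₀ : E} (hv : v ∈ s) (hu₀ : u₀ ∈ s)
    {f : E →L[ℝ] ℝ} (hf : f v < f u₀) :
    ∃ φ : E →L[ℝ] ℝ, v ∈ φ.toExposed s ∧ (∃ u ∈ φ.toExposed s, f v < f u) ∧
      φ.toExposed s ⊂ s := by
  obtain ⟨l, hl⟩ := hsi.exists_forall_lt hs hv
  obtain ⟨t, ht, hvt, u, hut, hfu⟩ := exists_tilt_toExposed hs hv hl hu₀ hf
  by_cases hproper : (l + t • f).toExposed s = s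
  swap
  · exact ⟨_, hvt, ⟨u, hut, hfu⟩, (l + t • f).toExposed_subset.ssubset_of_ne hproper⟩
  -- Then `s` lies in a hyperplane on which `l` is affine in `f`, and `v` is the `f`-minimal
  -- vertex; tilt instead towards a functional that is not affine in `f` on `s`.
  have hconst : ∀ w ∈ s, l w + t * f w = l v + t * f v := fun w hw =>
    ((l + t • f).mem_toExposed_iff_eq hvt).1 (hproper.ge hw) |>.2
  have habove : ∀ w ∈ s, w ≠ v → f v < f w := fun w hw hwv => by
    nlinarith [hl w hw hwv, hconst w hw]
  obtain ⟨g, ⟨u₁, hu₁, hgu₁⟩, hg⟩ := hsi.exists_lt_not_affine hs h3 v f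
  obtain ⟨t', ht', hvt', u', hut', hgu'⟩ := exists_tilt_toExposed hs hv hl hu₁ hgu₁
  by_cases hproper' : (l + t' • g).toExposed s = s
  swap
  · refine ⟨_, hvt', ⟨u', hut', habove u' hut'.1 ?_⟩,
      (l + t' • g).toExposed_subset.ssubset_of_ne hproper'⟩
    rintro rfl
    exact hgu'.false
  have hconst' : ∀ w ∈ s, l w + t' * g w = l v + t' * g v := fun w hw =>
    ((l + t' • g).mem_toExposed_iff_eq hvt').1 (hproper'.ge hw) |>.2
  refine absurd ⟨g v - t / t' * f v, t / t', fun w hw => ?_⟩ hg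
  field_simp
  linarith [hconst w hw, hconst' w hw]

theorem exists_lt_isExposed_segment {v u₀ : E} (hv : v ∈ s) (hu₀ : u₀ ∈ s) {f : E →L[ℝ] ℝ}
    (hf : f v < f u₀) :
    ∃ u ∈ s, f v < f u ∧ IsExposed ℝ (convexHull ℝ s) (segment ℝ v u) := by
  induction hn : s.ncard using Nat.strong_induction_on generalizing s u₀ with
  | _ n ih =>
  by_cases h2 : n ≤ 2
  · have hu₀v : v ≠ u₀ := by
      rintro rfl
      exact hf.false
    have hpair : s = {v, u₀} := (eq_of_subset_of_ncard_le (pair_subset hv hu₀)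
      (by rw [ncard_pair hu₀v]; omega) hs).symm
    refine ⟨u₀, hu₀, hf, ?_⟩
    rw [hpair, convexHull_pair]
  obtain ⟨φ, hvφ, ⟨u, huφ, hfu⟩, hssub⟩ := hsi.exists_toExposed_ssubset hs (by omega) hv hu₀ hf
  obtain ⟨u', hu', hfu', hexp⟩ := ih _ (hn ▸ ncard_lt_ncard hssub hs)
    (hsi.mono hssub.subset) (hs.subset hssub.subset) hvφ huφ hfu rfl
  exact ⟨u', hu'.1, hfu', (φ.isExposed_convexHull_toExposed hs).trans_convexHull hs hexp⟩

end ConvexIndependent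

theorem SimpleGraph.Reachable.induce_mono {V : Type*} {G G' : SimpleGraph V} {s t : Set V}
    (hG : G ≤ G') (hst : s ⊆ t) {a b : s} (h : (G.induce s).Reachable a b) :
    (G'.induce t).Reachable ⟨a, hst a.2⟩ ⟨b, hst b.2⟩ :=
  h.map (⟨fun x => ⟨x, hst x.2⟩, fun hxy => hG hxy⟩ : G.induce s →g G'.induce t)

section PolytopeGraph

variable {d : ℕ} {s : Set (Fin d → ℝ)}

theorem polytopeGraph_le_of_isExposed (hs : s.Finite) {F : Set (Fin d → ℝ)}
    (hF : IsExposed ℝ (convexHull ℝ s) F) : polytopeGraph F ≤ polytopeGraph (convexHull ℝ s) :=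
  fun _ _ ⟨huv, hu, hv, hseg⟩ => ⟨huv, hF.isExtreme.extremePoints_subset_extremePoints hu,
    hF.isExtreme.extremePoints_subset_extremePoints hv, hF.trans_convexHull hs hseg⟩

variable (hsi : ConvexIndependent ℝ ((↑) : s → Fin d → ℝ)) (hs : s.Finite)
include hsi hs

theorem exists_reachable_toExposed (f : (Fin d → ℝ) →L[ℝ] ℝ) {c : ℝ} {v : Fin d → ℝ}
    (hv : v ∈ {x ∈ s | c ≤ f x}) :
    ∃ m ∈ f.toExposed s, ∃ hm : m ∈ {x ∈ s | c ≤ f x},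
      ((polytopeGraph (convexHull ℝ s)).induce {x ∈ s | c ≤ f x}).Reachable ⟨v, hv⟩ ⟨m, hm⟩ := by
  set A := {x ∈ s | c ≤ f x}
  set R := {x | ∃ hx : x ∈ A, ((polytopeGraph (convexHull ℝ s)).induce A).Reachable ⟨v, hv⟩ ⟨x, hx⟩}
  obtain ⟨m, ⟨hmA, hvm⟩, hmax⟩ := R.exists_max_image f (hs.subset fun x hx => hx.1.1)
    ⟨v, hv, .rfl⟩
  refine ⟨m, ⟨hmA.1, fun u₀ hu₀ => ?_⟩, hmA, hvm⟩
  by_contra! hlt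
  obtain ⟨u, hu, hmu, hexp⟩ := hsi.exists_lt_isExposed_segment hs hmA.1 hu₀ hlt
  have huA : u ∈ A := ⟨hu, hmA.2.trans hmu.le⟩
  have hadj : ((polytopeGraph (convexHull ℝ s)).induce A).Adj ⟨m, hmA⟩ ⟨u, huA⟩ := by
    refine ⟨fun h => hmu.ne (congrArg f h), ?_, ?_, hexp⟩ <;>
      rw [hsi.extremePoints_convexHull hs]
    exacts [hmA.1, hu]
  exact (hmax u ⟨huA, hvm.trans hadj.reachable⟩).not_gt hmu

theorem preconnected_induce_of_toExposed (f : (Fin d → ℝ) →L[ℝ] ℝ) (c : ℝ)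
    (hface : ((polytopeGraph (convexHull ℝ (f.toExposed s))).induce (f.toExposed s)).Preconnected) :
    ((polytopeGraph (convexHull ℝ s)).induce {x ∈ s | c ≤ f x}).Preconnected := by
  rintro ⟨x, hx⟩ ⟨y, hy⟩
  obtain ⟨m₁, hm₁, hm₁A, hxm₁⟩ := exists_reachable_toExposed hsi hs f hx
  obtain ⟨m₂, hm₂, hm₂A, hym₂⟩ := exists_reachable_toExposed hsi hs f hy
  have hface_sub : f.toExposed s ⊆ {x ∈ s | c ≤ f x} := fun w hw => ⟨hw.1, hx.2.trans (hw.2 x hx.1)⟩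
  have hm₁m₂ := (hface ⟨m₁, hm₁⟩ ⟨m₂, hm₂⟩).induce_mono
    (polytopeGraph_le_of_isExposed hs (f.isExposed_convexHull_toExposed hs)) hface_sub
  exact hxm₁.trans (hm₁m₂.trans hym₂.symm)

theorem preconnected_induce_polytopeGraph :
    ((polytopeGraph (convexHull ℝ s)).induce s).Preconnected := by
  induction hn : s.ncard using Nat.strong_induction_on generalizing s with
  | _ n ih =>
  rintro ⟨x, hx⟩ ⟨y, hy⟩
  rcases eq_or_ne x y with rfl | hxy
  · rfl
  obtain ⟨g, hg⟩ := SeparatingDual.exists_separating_of_ne (R := ℝ) hxy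
  have hssub : g.toExposed s ⊂ s := g.toExposed_subset.ssubset_of_ne fun h => by
    have hx' := (h.ge hx).2 y hy
    have hy' := (h.ge hy).2 x hx
    exact hg (hx'.antisymm' hy')
  have hface := ih _ (hn ▸ ncard_lt_ncard hssub hs) (hsi.mono hssub.subset)
    (hs.subset hssub.subset) rfl
  exact (preconnected_induce_of_toExposed hsi hs g (min (g x) (g y)) hface
    ⟨x, hx, min_le_left _ _⟩ ⟨y, hy, min_le_right _ _⟩).induce_mono le_rfl (sep_subset _ _)

theorem preconnected_induce_halfSpace (f : (Fin d → ℝ) →L[ℝ] ℝ) (c : ℝ) :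
    ((polytopeGraph (convexHull ℝ s)).induce {x ∈ s | c ≤ f x}).Preconnected :=
  preconnected_induce_of_toExposed hsi hs f c <| preconnected_induce_polytopeGraph
    (hsi.mono f.toExposed_subset) (hs.subset f.toExposed_subset)

end PolytopeGraph

/-- Face version of complementary connectedness: if `P = conv S` is a polytope
(`S` finite), `F` a nonempty (exposed) face of `P`, and the set of extreme points `v`
of `P` lying in `F` with `f v ≤ c` is nonempty, then this set induces a connected
subgraph of the graph of `P`. -/
theorem face_complement_of_cutset_connected (d : ℕ) (S : Set (Fin d → ℝ)) (hS : S.Finite)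
    (F : Set (Fin d → ℝ)) (hF : IsExposed ℝ (convexHull ℝ S) F) (hFne : F.Nonempty)
    (f : (Fin d → ℝ) →ₗ[ℝ] ℝ) (c : ℝ)
    (hne : {v ∈ (convexHull ℝ S).extremePoints ℝ | v ∈ F ∧ f v ≤ c}.Nonempty) :
    ((polytopeGraph (convexHull ℝ S)).induce
      {v ∈ (convexHull ℝ S).extremePoints ℝ | v ∈ F ∧ f v ≤ c}).Connected := by
  set V := (convexHull ℝ S).extremePoints ℝ
  have hV : V.Finite := hS.subset extremePoints_convexHull_subset
  have hVi : ConvexIndependent ℝ ((↑) : V → Fin d → ℝ) :=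
    (convex_convexHull ℝ S).convexIndependent_extremePoints
  have hPV : convexHull ℝ V = convexHull ℝ S := convexHull_extremePoints_eq_of_finite
    (hS.isCompact_convexHull (𝕜 := ℝ)) (convex_convexHull ℝ S) hV
  obtain ⟨l, hl⟩ := hF hFne
  replace hl : F = l.toExposed (convexHull ℝ S) := hl
  set f' := -LinearMap.toContinuousLinearMap f
  have hvertices : {v ∈ V | v ∈ F ∧ f v ≤ c} = {v ∈ l.toExposed V | -c ≤ f' v} := by
    ext v
    have hf' : -c ≤ f' v ↔ f v ≤ c := by simp [f']
    rw [mem_sep_iff, mem_sep_iff, hf', hl, ← hPV]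
    exact ⟨fun ⟨hv, hvF, hvc⟩ => ⟨(l.mem_toExposed_convexHull_iff hv).1 hvF, hvc⟩,
      fun ⟨hvF, hvc⟩ => ⟨hvF.1, (l.mem_toExposed_convexHull_iff hvF.1).2 hvF, hvc⟩⟩
  rw [hvertices] at hne ⊢
  have hle := polytopeGraph_le_of_isExposed hV (l.isExposed_convexHull_toExposed hV)
  rw [hPV] at hle
  have := hne.to_subtype
  exact ⟨fun a b => (preconnected_induce_halfSpace (hVi.mono l.toExposed_subset)
    (hV.subset l.toExposed_subset) f' (-c) a b).induce_mono hle subset_rfl⟩
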